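/- arXiv:2303.16558 — 4 statements merged into one kernel-verified Lean document; each statement's English description precedes it below -/
import Mathlib

section
/- For q = 1/2, the equation (T+S-1)x^3 + (1-T-2S+q(S-1-T))x^2 + (S+q(T-S))x = 0 has nonzero roots exactly x = 1/2 and x = (T+S)/(T+S-1), provided T+S-1 ≠ 0. -/
theorem cubic_roots_q_half (T S : ℝ) (hST : T + S - 1 ≠ 0) (x : ℝ) (hx : x ≠ 0) :
    (T + S - 1) * x ^ 3 + (1 - T - 2 * S + (1 / 2) * (S - 1 - T)) * x ^ 2
      + (S + (1 / 2) * (T - S)) * x = 0 ↔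
    x = 1 / 2 ∨ x = (T + S) / (T + S - 1) := by
  constructor
  · intro h
    have key : (2 * x - 1) * ((T + S - 1) * x - (T + S)) = 0 := by
      have h2 : x * ((2 * x - 1) * ((T + S - 1) * x - (T + S))) = 0 := by
        nlinarith [h]
      rcases mul_eq_zero.mp h2 with h' | h'
      · exact absurd h' hx
      · exact h'
    rcases mul_eq_zero.mp key with h' | h'
    · left; linarith
    · right
      rw [eq_div_iff hST]; linarith
  · rintro (rfl | rfl)
    · ring
    · field_simp
      ring
end

section
/- For 0 < q < 1/2 and S > q/(q-1), the quantity q(2q-1)[q - (q-1)S] is negative, hence Δ = (1-q)²T² + 2[(q-q²)S + q² + 2q - 1]T + q²S² + 2q(1-q)S + (q-1)² > 0 for all real T. -/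
theorem delta_positive (q S : ℝ) (hq0 : 0 < q) (hq1 : q < 1 / 2)
    (hS : S > q / (q - 1)) :
    q * (2 * q - 1) * (q - (q - 1) * S) < 0 ∧
    ∀ T : ℝ, (1 - q) ^ 2 * T ^ 2 + 2 * ((q - q ^ 2) * S + q ^ 2 + 2 * q - 1) * T
      + q ^ 2 * S ^ 2 + 2 * q * (1 - q) * S + (q - 1) ^ 2 > 0 := by
  have hq1' : q - 1 < 0 := by linarith
  have hS' : (q - 1) * S < q := by
    have := (div_lt_iff_of_neg hq1').mp hS
    linarith [this]
  have h1 : q * (2 * q - 1) * (q - (q - 1) * S) < 0 := by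
    have h2 : 2 * q - 1 < 0 := by linarith
    have h3 : 0 < q - (q - 1) * S := by linarith
    nlinarith [mul_neg_of_pos_of_neg (mul_pos hq0 h3) h2]
  refine ⟨h1, fun T => ?_⟩
  have hA : 0 < (1 - q) ^ 2 := pow_pos (by linarith : (0:ℝ) < 1 - q) 2
  nlinarith [sq_nonneg ((1 - q) ^ 2 * T + ((q - q ^ 2) * S + q ^ 2 + 2 * q - 1)),
    mul_pos hA hA, sq_nonneg (1 - q)]
end

section
/- For 0 < q < 1/2 and S with s₁ = -q(1-q)/(1-2q) < S < s₂ = q/(q-1), the two roots T₁ ≤ T₂ of Δ(T) = 0 (with Δ as a quadratic in T) satisfy T₂ < T₃ < (1-(S+1)q)/(1-q), where T₃ = (q-1)S/q and T_{1,2} = [-((1-q)qS + q² + 2q - 1) ∓ 2√(2q³ - q² - (2q³-3q²+q)S)]/(1-q)². -/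
theorem T_roots_ordering_middle_case (q S : ℝ) (hq0 : 0 < q) (hq1 : q < 1 / 2)
    (hS1 : -q * (1 - q) / (1 - 2 * q) < S) (hS2 : S < q / (q - 1)) :
    let T₂ := (-((1 - q) * q * S + q ^ 2 + 2 * q - 1)
      + 2 * Real.sqrt (2 * q ^ 3 - q ^ 2 - (2 * q ^ 3 - 3 * q ^ 2 + q) * S)) / (1 - q) ^ 2
    let T₃ := (q - 1) * S / q
    T₂ < T₃ ∧ T₃ < (1 - (S + 1) * q) / (1 - q) := by
  intro T₂ T₃
  have hq2 : 0 < 1 - 2 * q := by linarith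
  have h1q : 0 < 1 - q := by linarith
  have hS1' : -q * (1 - q) < S * (1 - 2 * q) := (div_lt_iff₀ hq2).mp hS1
  have hS2' : q < S * (q - 1) := by
    have hq1' : q - 1 < 0 := by linarith
    exact (lt_div_iff_of_neg hq1').mp hS2
  set D : ℝ := 2 * q ^ 3 - q ^ 2 - (2 * q ^ 3 - 3 * q ^ 2 + q) * S with hDdef
  have hD : 0 < D := by
    have h := mul_pos (mul_pos hq0 hq2) (sub_pos.mpr hS2')
    nlinarith [h]
  set w : ℝ := Real.sqrt D with hwdef
  have hw0 : 0 ≤ w := Real.sqrt_nonneg D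
  have hw2 : w ^ 2 = D := Real.sq_sqrt hD.le
  set R : ℝ := q * ((1 - q) * q * S + q ^ 2 + 2 * q - 1) - (1 - q) ^ 3 * S with hRdef
  have hR : 0 < R := by
    have h := mul_pos hq2 (sub_pos.mpr hS2')
    nlinarith [h, pow_pos hq0 3]
  have hc : (2 * q - 1) * S - q * (1 - q) < 0 := by nlinarith [hS1']
  have hc2 : 0 < ((2 * q - 1) * S - q * (1 - q)) ^ 2 := by nlinarith [hc]
  have hposc : 0 < (1 - q) ^ 2 * ((2 * q - 1) * S - q * (1 - q)) ^ 2 :=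
    mul_pos (pow_pos h1q 2) hc2
  have h4 : 4 * q ^ 2 * w ^ 2 = 4 * q ^ 2 * D := by rw [hw2]
  have hsq : (2 * q * w) ^ 2 < R ^ 2 := by nlinarith [h4, hposc]
  have hkey : 2 * q * w < R := by
    nlinarith [hsq, hR, mul_nonneg (mul_nonneg (by norm_num : (0:ℝ) ≤ 2) hq0.le) hw0]
  constructor
  · show (-((1 - q) * q * S + q ^ 2 + 2 * q - 1) + 2 * w) / (1 - q) ^ 2 < (q - 1) * S / q
    rw [div_lt_div_iff₀ (by positivity) hq0]
    nlinarith [hkey]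
  · show (q - 1) * S / q < (1 - (S + 1) * q) / (1 - q)
    rw [div_lt_div_iff₀ hq0 h1q]
    linarith [hS1']
end

section
/- For 0 < q < 1/2 and S ≤ s₁ = -q(1-q)/(1-2q), the roots T₁ < T₂ of Δ(T) = 0 satisfy T₁ ≤ (1-(S+1)q)/(1-q) ≤ T₂ and (1-(S+1)q)/(1-q) ≤ T₃, where T₃ = (q-1)S/q. -/
theorem T_roots_ordering_low_case (q S : ℝ) (hq0 : 0 < q) (hq1 : q < 1 / 2)
    (hS : S ≤ -q * (1 - q) / (1 - 2 * q)) :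
    let T₁ := (-((1 - q) * q * S + q ^ 2 + 2 * q - 1)
      - 2 * Real.sqrt (2 * q ^ 3 - q ^ 2 - (2 * q ^ 3 - 3 * q ^ 2 + q) * S)) / (1 - q) ^ 2
    let T₂ := (-((1 - q) * q * S + q ^ 2 + 2 * q - 1)
      + 2 * Real.sqrt (2 * q ^ 3 - q ^ 2 - (2 * q ^ 3 - 3 * q ^ 2 + q) * S)) / (1 - q) ^ 2
    let T₃ := (q - 1) * S / q
    T₁ ≤ (1 - (S + 1) * q) / (1 - q) ∧ (1 - (S + 1) * q) / (1 - q) ≤ T₂ ∧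
    (1 - (S + 1) * q) / (1 - q) ≤ T₃ := by
  intro T₁ T₂ T₃
  have h2q : (0:ℝ) < 1 - 2 * q := by linarith
  have h1q : (0:ℝ) < 1 - q := by linarith
  have hS' : S * (1 - 2 * q) ≤ -q * (1 - q) := (le_div_iff₀ h2q).mp hS
  set E : ℝ := 2 * q ^ 3 - q ^ 2 - (2 * q ^ 3 - 3 * q ^ 2 + q) * S with hE
  have hE4 : q ^ 4 ≤ E := by
    have h := mul_nonneg (mul_nonneg hq0.le h1q.le)
      (by linarith : (0:ℝ) ≤ -q * (1 - q) - S * (1 - 2 * q))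
    nlinarith [h]
  have hR : q ^ 2 ≤ Real.sqrt E := by
    have : Real.sqrt (q ^ 4) ≤ Real.sqrt E := Real.sqrt_le_sqrt hE4
    have h4 : Real.sqrt (q ^ 4) = q ^ 2 := by
      rw [show q ^ 4 = (q ^ 2) ^ 2 by ring, Real.sqrt_sq (by positivity)]
    linarith
  have hRnn : 0 ≤ Real.sqrt E := Real.sqrt_nonneg _
  have hsq : (0:ℝ) < (1 - q) ^ 2 := by positivity
  refine ⟨?_, ?_, ?_⟩
  · show _ ≤ _
    rw [div_le_div_iff₀ hsq h1q]
    nlinarith [hRnn]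
  · show _ ≤ _
    rw [div_le_div_iff₀ h1q hsq]
    nlinarith [hR]
  · show _ ≤ _
    rw [div_le_div_iff₀ h1q hq0]
    nlinarith [hS']
end
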